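/- Let n ≥ 4 and let e_1, …, e_n be vectors of a real inner product space with N(e_m) ≤ 1 for all m; set e = (e_1 + ⋯ + e_n)/2 and t = N(e). Then there exist pairwise distinct indices i, j, k such that, writing u = N(e − e_i), v = N(e − e_i − e_j) and w = N(e − e_i − e_j − e_k): (a) u ≤ (n + (n−4)t)/n; (b) v ≤ (n + (n−4)u − t)/(n−1); (c) w ≤ (n + (n−4)v − 2u)/(n−2); moreover i may be chosen so that u ≤ N(e − e_m) for every m, and then for every integer ℓ > 0 one has N(e − ℓe_i) ≤ ℓu − (ℓ−1)t + ℓ(ℓ−1). -/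

import Mathlib

open scoped BigOperators
noncomputable section

variable {F : Type*} [NormedAddCommGroup F] [InnerProductSpace ℝ F]

/-- `Nm x = ⟪x, x⟫`, the square of the usual norm. -/
def Nm (x : F) : ℝ := inner ℝ x x

/-!
Choose the indices greedily: `i` minimises `N(e - eₘ)` over all `m`, `j` minimises
`N(e - eᵢ - eₘ)` over `m ≠ i`, and `k` minimises `N(e - eᵢ - eⱼ - eₘ)` over `m ∉ {i, j}`.
Each minimum is at most the average, and the averages are explicit: if `a = e - ∑_{m ∈ T} eₘ`
and `S` is the complement of `T`, then `∑_{m ∈ S} eₘ = a + e`, so `∑_{m ∈ S} N(a - eₘ)` depends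
only on `N(a)`, `N(e)`, `N(e - a)` and the `N(eₘ) ≤ 1`. For (c) one also needs
`u ≤ N(e - eⱼ)`, i.e. the minimality of `i`. The last claim follows from the identity
`N(e - c x) = c N(e - x) - (c - 1) N(e) + c (c - 1) N(x)`.
-/

open Finset

theorem Nm_sub (x y : F) : Nm (x - y) = Nm x - 2 * inner ℝ x y + Nm y :=
  real_inner_sub_sub_self x y

theorem Nm_smul (c : ℝ) (x : F) : Nm (c • x) = c ^ 2 * Nm x := by
  simp only [Nm, real_inner_smul_left, real_inner_smul_right]
  ring

theorem Nm_sub_smul (c : ℝ) (v x : F) :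
    Nm (v - c • x) = c * Nm (v - x) - (c - 1) * Nm v + c * (c - 1) * Nm x := by
  rw [Nm_sub, Nm_sub, Nm_smul, real_inner_smul_right]
  ring

theorem Nm_add_add_Nm_sub_add_Nm_sub (v x y : F) :
    Nm (x + y) + Nm (v - x) + Nm (v - y) = Nm v + Nm (v - x - y) + Nm x + Nm y := by
  simp only [Nm, inner_add_left, inner_add_right, inner_sub_left, inner_sub_right,
    real_inner_comm x y, real_inner_comm v x, real_inner_comm v y]
  ring

theorem sum_Nm_sub_of_sum_eq {ι : Type*} (s : Finset ι) (e : ι → F) {a v : F}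
    (hsum : ∑ m ∈ s, e m = a + v) :
    ∑ m ∈ s, Nm (a - e m) = (#s - 3) * Nm a - Nm v + Nm (v - a) + ∑ m ∈ s, Nm (e m) := by
  simp only [Nm_sub a, sum_add_distrib, sum_sub_distrib, sum_const, nsmul_eq_mul,
    ← mul_sum, ← inner_sum, hsum, inner_add_right, Nm_sub v a, real_inner_comm v a]
  simp only [Nm]
  ring

theorem exists_min_Nm_sub_card_mul_le {ι : Type*} {s : Finset ι} (hs : s.Nonempty)
    {e : ι → F} (he : ∀ m ∈ s, Nm (e m) ≤ 1) {a v : F} (hsum : ∑ m ∈ s, e m = a + v) :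
    ∃ m ∈ s, (∀ m' ∈ s, Nm (a - e m) ≤ Nm (a - e m')) ∧
      #s * Nm (a - e m) ≤ #s + (#s - 3) * Nm a - Nm v + Nm (v - a) := by
  obtain ⟨m, hm, hmin⟩ := s.exists_min_image (fun m => Nm (a - e m)) hs
  refine ⟨m, hm, hmin, ?_⟩
  have hle_sum : #s • Nm (a - e m) ≤ ∑ m' ∈ s, Nm (a - e m') := card_nsmul_le_sum _ _ _ hmin
  have hsum_le : ∑ m' ∈ s, Nm (e m') ≤ #s • (1 : ℝ) := sum_le_card_nsmul _ _ _ he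
  rw [sum_Nm_sub_of_sum_eq s e hsum, nsmul_eq_mul] at hle_sum
  rw [nsmul_eq_mul, mul_one] at hsum_le
  linarith

/-- let `n ≥ 4`, `N(eₘ) ≤ 1` for all `m`, `e = (e₁+⋯+eₙ)/2` and
`t = N(e)`. Then there are pairwise distinct indices `i, j, k` with, writing
`u = N(e-eᵢ)`, `v = N(e-eᵢ-eⱼ)`, `w = N(e-eᵢ-eⱼ-eₖ)`:
(a) `u ≤ (n+(n-4)t)/n`; (b) `v ≤ (n+(n-4)u-t)/(n-1)`;
(c) `w ≤ (n+(n-4)v-2u)/(n-2)`; moreover `i` may be chosen so that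
`u ≤ N(e-eₘ)` for all `m`, and then `N(e-ℓeᵢ) ≤ ℓu-(ℓ-1)t+ℓ(ℓ-1)` for all `ℓ > 0`. -/
theorem lemma_tuvw (n : ℕ) (hn : 4 ≤ n) (e : Fin n → F)
    (he : ∀ m, Nm (e m) ≤ 1)
    (v : F) (hv : v = (2 : ℝ)⁻¹ • ∑ m, e m) :
    ∃ i j k : Fin n, i ≠ j ∧ i ≠ k ∧ j ≠ k ∧
      Nm (v - e i) ≤ ((n : ℝ) + ((n : ℝ) - 4) * Nm v) / n ∧
      Nm (v - e i - e j) ≤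
        ((n : ℝ) + ((n : ℝ) - 4) * Nm (v - e i) - Nm v) / ((n : ℝ) - 1) ∧
      Nm (v - e i - e j - e k) ≤
        ((n : ℝ) + ((n : ℝ) - 4) * Nm (v - e i - e j) - 2 * Nm (v - e i)) / ((n : ℝ) - 2) ∧
      (∀ m : Fin n, Nm (v - e i) ≤ Nm (v - e m)) ∧
      ∀ ℓ : ℕ, 0 < ℓ →
        Nm (v - (ℓ : ℝ) • e i) ≤
          (ℓ : ℝ) * Nm (v - e i) - ((ℓ : ℝ) - 1) * Nm v + (ℓ : ℝ) * ((ℓ : ℝ) - 1) := by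
  have hn' : (4 : ℝ) ≤ n := by exact_mod_cast hn
  have hsum : ∑ m, e m = v + v := by rw [hv, ← add_smul]; norm_num
  obtain ⟨i, -, hi_min, hi⟩ := exists_min_Nm_sub_card_mul_le
    (univ_nonempty_iff.mpr ⟨⟨0, by omega⟩⟩) (fun m _ => he m) hsum
  have hsum_i : ∑ m ∈ univ.erase i, e m = (v - e i) + v := by
    rw [sum_erase_eq_sub (mem_univ i), hsum]; abel
  have hcard_i : #(univ.erase i) = n - 1 := by simp
  obtain ⟨j, hj, -, hj_le⟩ := exists_min_Nm_sub_card_mul_le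
    (card_pos.mp (by omega)) (fun m _ => he m) hsum_i
  have hsum_ij : ∑ m ∈ (univ.erase i).erase j, e m = (v - e i - e j) + v := by
    rw [sum_erase_eq_sub hj, hsum_i]; abel
  have hcard_ij : #((univ.erase i).erase j) = n - 2 := by rw [card_erase_of_mem hj, hcard_i]; omega
  obtain ⟨k, hk, -, hk_le⟩ := exists_min_Nm_sub_card_mul_le
    (card_pos.mp (by omega)) (fun m _ => he m) hsum_ij
  rw [card_univ, Fintype.card_fin, sub_self, show Nm (0 : F) = 0 from inner_zero_left _] at hi
  rw [hcard_i, Nat.cast_sub (by omega), Nat.cast_one, sub_sub_cancel] at hj_le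
  rw [hcard_ij, Nat.cast_sub (by omega), Nat.cast_ofNat,
    show v - (v - e i - e j) = e i + e j by abel] at hk_le
  refine ⟨i, j, k, (ne_of_mem_erase hj).symm, (ne_of_mem_erase (mem_of_mem_erase hk)).symm,
    (ne_of_mem_erase hk).symm, ?_, ?_, ?_, fun m => hi_min m (mem_univ m), fun ℓ hℓ => ?_⟩
  · rw [le_div_iff₀ (by linarith)]; linarith
  · rw [le_div_iff₀ (by linarith)]; linarith [he i]
  · rw [le_div_iff₀ (by linarith)]
    linarith [Nm_add_add_Nm_sub_add_Nm_sub v (e i) (e j), hi_min j (mem_univ j), he i, he j]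
  · have hcoef : (0 : ℝ) ≤ ℓ * (ℓ - 1) :=
      mul_nonneg ℓ.cast_nonneg (sub_nonneg.mpr (Nat.one_le_cast.mpr hℓ))
    rw [Nm_sub_smul]
    linarith [mul_le_of_le_one_right hcoef (he i)]
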